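/- If a Veltman frame F satisfies the frame condition F^n := ∀x_{n+1},x_0,y_0,y_{n+1} (B_n(x_{n+1},x_0,y_0,y_{n+1}) → ∀u (y_{n+1}Ru → y_0 S_{x_0} u)), then F validates the principle R^n := A ▷ B → (U_n ∧ (D_n ▷ A)) ▷ (B ∧ □C) under every valuation (for n ≥ 1; for n = 0, R^0 := A▷B → ¬(A▷¬C) ▷ B∧□C). -/
import Mathlib


/-- Formulas of interpretability logic: propositional variables, ⊥, →, □, ▷. -/
inductive ILForm : Type
  | var : ℕ → ILForm
  | bot : ILForm
  | impl : ILForm → ILForm → ILForm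
  | box : ILForm → ILForm
  | rhd : ILForm → ILForm → ILForm
  deriving DecidableEq

namespace ILForm

def neg (A : ILForm) : ILForm := impl A bot
def top : ILForm := neg bot
def conj (A B : ILForm) : ILForm := neg (impl A (neg B))
def disj (A B : ILForm) : ILForm := impl (neg A) B
def dia (A : ILForm) : ILForm := neg (box (neg A))

end ILForm

infixr:30 " ⟹ " => ILForm.impl
infixl:65 " ⋀ " => ILForm.conj
infixl:64 " ⋁ " => ILForm.disj
infix:50 " ▷ " => ILForm.rhd
prefix:70 "□" => ILForm.box
prefix:70 "◇" => ILForm.dia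
prefix:70 "∼" => ILForm.neg

/-- Propositional evaluation of a formula, treating boxed and ▷-formulas
(and variables) as atoms evaluated by `g`.  A formula is an instance of a
propositional tautology iff it evaluates to `true` under every such `g`. -/
def ILForm.evalProp (g : ILForm → Bool) : ILForm → Bool
  | .bot => false
  | .impl a b => !(ILForm.evalProp g a) || ILForm.evalProp g b
  | f => g f

/-- Hilbert-style provability in the interpretability logic IL extended with
an additional set `Ax` of axioms. -/
inductive ILProv (Ax : Set ILForm) : ILForm → Prop
  | ax {A : ILForm} : A ∈ Ax → ILProv Ax A
  | taut {A : ILForm} : (∀ g : ILForm → Bool, A.evalProp g = true) → ILProv Ax A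
  | L1 (A B : ILForm) : ILProv Ax ((□(A ⟹ B)) ⟹ ((□A) ⟹ (□B)))
  | L2 (A : ILForm) : ILProv Ax ((□A) ⟹ (□□A))
  | L3 (A : ILForm) : ILProv Ax ((□((□A) ⟹ A)) ⟹ (□A))
  | J1 (A B : ILForm) : ILProv Ax ((□(A ⟹ B)) ⟹ (A ▷ B))
  | J2 (A B C : ILForm) : ILProv Ax (((A ▷ B) ⋀ (B ▷ C)) ⟹ (A ▷ C))
  | J3 (A B C : ILForm) : ILProv Ax (((A ▷ C) ⋀ (B ▷ C)) ⟹ ((A ⋁ B) ▷ C))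
  | J4 (A B : ILForm) : ILProv Ax ((A ▷ B) ⟹ ((◇A) ⟹ (◇B)))
  | J5 (A : ILForm) : ILProv Ax ((◇A) ▷ A)
  | mp {A B : ILForm} : ILProv Ax (A ⟹ B) → ILProv Ax A → ILProv Ax B
  | nec {A : ILForm} : ILProv Ax A → ILProv Ax (□A)

/-- Substitution of formulas for propositional variables. -/
def ILForm.substVar (σ : ℕ → ILForm) : ILForm → ILForm
  | .var n => σ n
  | .bot => .bot
  | .impl a b => .impl (ILForm.substVar σ a) (ILForm.substVar σ b)
  | .box a => .box (ILForm.substVar σ a)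
  | .rhd a b => .rhd (ILForm.substVar σ a) (ILForm.substVar σ b)

/-- All substitution instances of a modal scheme. -/
def instancesOf (A : ILForm) : Set ILForm := {B | ∃ σ : ℕ → ILForm, B = ILForm.substVar σ A}

/-- Helper for simultaneous replacement of subformula occurrences. -/
def ILForm.hit (ps : List (ILForm × ILForm)) (f : ILForm) : Option ILForm :=
  (ps.find? fun pq => decide (pq.1 = f)).map (·.2)

/-- Simultaneous replacement of (outermost) occurrences of the patterns
`p` by the corresponding `q`, for `(p,q)` in the list `ps`. -/
def ILForm.replL (ps : List (ILForm × ILForm)) : ILForm → ILForm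
  | .var n => (ILForm.hit ps (.var n)).getD (.var n)
  | .bot => (ILForm.hit ps .bot).getD .bot
  | .impl a b =>
      (ILForm.hit ps (.impl a b)).getD (.impl (ILForm.replL ps a) (ILForm.replL ps b))
  | .box a => (ILForm.hit ps (.box a)).getD (.box (ILForm.replL ps a))
  | .rhd a b =>
      (ILForm.hit ps (.rhd a b)).getD (.rhd (ILForm.replL ps a) (ILForm.replL ps b))

/-- The placeholder variables `A_n`, `B_n`, `C_n`, `E_n`. -/
def Av (n : ℕ) : ILForm := .var (4*n)
def Bv (n : ℕ) : ILForm := .var (4*n+1)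
def Cv (n : ℕ) : ILForm := .var (4*n+2)
def Ev (n : ℕ) : ILForm := .var (4*n+3)

/-- The slim series `R_n`, defined by the substitutions of the paper:
`R_0 := A_0▷B_0 → ¬(A_0▷¬C_0) ▷ B_0∧□C_0`;
`R_{2n+1} := R_{2n}[¬(A_n▷¬C_n)/¬(A_n▷¬C_n)∧(E_{n+1}▷◇A_{n+1});
                    B_n∧□C_n/B_n∧□C_n∧(E_{n+1}▷A_{n+1})]`;
`R_{2n+2} := R_{2n+1}[B_n/B_n∧(A_{n+1}▷B_{n+1}); ◇A_{n+1}/¬(A_{n+1}▷¬C_{n+1});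
     (E_{n+1}▷A_{n+1})/(E_{n+1}▷A_{n+1})∧(E_{n+1}▷B_{n+1}∧□C_{n+1})]`. -/
def Rser : ℕ → ILForm
  | 0 => (Av 0 ▷ Bv 0) ⟹ ((∼(Av 0 ▷ (∼(Cv 0)))) ▷ ((Bv 0) ⋀ (□(Cv 0))))
  | n+1 =>
    let k := n / 2
    if n % 2 = 0 then
      ILForm.replL
        [ (∼(Av k ▷ (∼(Cv k))), (∼(Av k ▷ (∼(Cv k)))) ⋀ (Ev (k+1) ▷ (◇(Av (k+1))))),
          ((Bv k) ⋀ (□(Cv k)), ((Bv k) ⋀ (□(Cv k))) ⋀ (Ev (k+1) ▷ Av (k+1))) ]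
        (Rser n)
    else
      ILForm.replL
        [ (Bv k, (Bv k) ⋀ (Av (k+1) ▷ Bv (k+1))),
          (◇(Av (k+1)), ∼(Av (k+1) ▷ (∼(Cv (k+1))))),
          (Ev (k+1) ▷ Av (k+1),
            (Ev (k+1) ▷ Av (k+1)) ⋀ (Ev (k+1) ▷ ((Bv (k+1)) ⋀ (□(Cv (k+1)))))) ]
        (Rser n)

/-- The formulas `X_n` of the well-behaved subhierarchy. -/
def Xt (A B : ℕ → ILForm) : ℕ → ILForm
  | 0 => A 0 ▷ B 0
  | n+1 => A (n+1) ▷ ((B (n+1)) ⋀ (Xt A B n))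

/-- The formulas `Y_n` of the well-behaved subhierarchy. -/
def Yt (A C E : ℕ → ILForm) : ℕ → ILForm
  | 0 => ∼(A 0 ▷ (∼(C 0)))
  | n+1 => (∼(A (n+1) ▷ (∼(C (n+1))))) ⋀ (E (n+1) ▷ (Yt A C E n))

/-- The formulas `Z_n` of the well-behaved subhierarchy. -/
def Zt (A B C E : ℕ → ILForm) : ℕ → ILForm
  | 0 => (B 0) ⋀ (□(C 0))
  | n+1 => (((B (n+1)) ⋀ (Xt A B n)) ⋀ (□(C (n+1)))) ⋀
             ((E (n+1) ▷ A n) ⋀ (E (n+1) ▷ (Zt A B C E n)))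

/-- The principles `R̃_n = X_n → Y_n ▷ Z_n`. -/
def Rtilde (A B C E : ℕ → ILForm) (n : ℕ) : ILForm :=
  (Xt A B n) ⟹ ((Yt A C E n) ▷ (Zt A B C E n))

/-- `X_{k-1}`, with the convention `X_{-1} = ⊤`. -/
def Xminus (A B : ℕ → ILForm) : ℕ → ILForm
  | 0 => ILForm.top
  | n+1 => Xt A B n

/-- `A_{k-1}`, with the convention `A_{-1} = ⊤`. -/
def Aminus (A : ℕ → ILForm) : ℕ → ILForm
  | 0 => ILForm.top
  | n+1 => A n

/-- `Z_{k-1}`, with the convention `Z_{-1} = ⊤`. -/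
def Zminus (A B C E : ℕ → ILForm) : ℕ → ILForm
  | 0 => ILForm.top
  | n+1 => Zt A B C E n

/-- Veltman frames. -/
structure Veltman where
  W : Type
  ne : Nonempty W
  R : W → W → Prop
  S : W → W → W → Prop
  R_trans : ∀ {x y z}, R x y → R y z → R x z
  R_cwf : WellFounded (fun x y => R y x)
  S_dom : ∀ {x y z}, S x y z → R x y ∧ R x z
  S_refl : ∀ {x y}, R x y → S x y y
  S_trans : ∀ {x y z u}, S x y z → S x z u → S x y u
  R_sub_S : ∀ {x y z}, R x y → R y z → S x y z

/-- Forcing in a Veltman model. -/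
def force (F : Veltman) (V : ℕ → F.W → Prop) : ILForm → F.W → Prop
  | .var n => fun w => V n w
  | .bot => fun _ => False
  | .impl a b => fun w => force F V a w → force F V b w
  | .box a => fun w => ∀ v, F.R w v → force F V a v
  | .rhd a b => fun w => ∀ v, F.R w v → force F V a v →
      ∃ u, F.S w v u ∧ force F V b u

/-- A formula is valid on a frame if it is forced at every world under every valuation. -/
def valid (F : Veltman) (A : ILForm) : Prop := ∀ (V : ℕ → F.W → Prop) (w : F.W), force F V A w

/-- The `C`-assuring successor relation `x R^C_⊩ y`. -/
def RC (F : Veltman) (V : ℕ → F.W → Prop) (C : ILForm) (x y : F.W) : Prop :=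
  F.R x y ∧ force F V C y ∧ ∀ z, F.S x y z → force F V C z

/-- The ternary relations `G_n` on a Veltman frame. -/
def G (F : Veltman) : ℕ → F.W → F.W → F.W → Prop
  | 0 => fun x y z => ∀ u, F.R z u → F.S x y u
  | n+1 => fun x y z => ∀ u, F.R z u → F.S x y u ∧ ∀ v, F.S x u v → G F n z u v

/-- The frame conditions `F_n` of the slim hierarchy. -/
def Fcond (F : Veltman) (n : ℕ) : Prop :=
  ∀ w x y z, F.R w x → F.R x y → F.S w y z → G F n x y z

/-- The quaternary relations `B_n` on a Veltman frame. -/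
def Bq (F : Veltman) : ℕ → F.W → F.W → F.W → F.W → Prop
  | 0 => fun x1 x0 y0 y1 => F.R x1 x0 ∧ F.R x0 y0 ∧ F.S x1 y0 y1
  | n+1 => fun x' x0 y0 y' => ∃ xn yn, F.R x' xn ∧ Bq F n xn x0 y0 yn ∧ F.S x' yn y'

/-- The formulas `U_n` of the broad series (with `U_0 := ⊤`, unused). -/
def Ubr (C : ILForm) (D : ℕ → ILForm) : ℕ → ILForm
  | 0 => ILForm.top
  | 1 => ◇(∼(D 1 ▷ (∼C)))
  | n+2 => ◇(((D (n+1)) ▷ (D (n+2))) ⋀ (Ubr C D (n+1)))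

/-- The frame conditions `F^n` of the broad series. -/
def FbroadCond (F : Veltman) (n : ℕ) : Prop :=
  ∀ x1 x0 y0 y1, Bq F n x1 x0 y0 y1 → ∀ u, F.R y1 u → F.S x0 y0 u

/-- The principles `R^n` of the broad series. -/
def Rbroad (A B C : ILForm) (D : ℕ → ILForm) : ℕ → ILForm
  | 0 => (A ▷ B) ⟹ ((∼(A ▷ (∼C))) ▷ (B ⋀ (□C)))
  | n+1 => (A ▷ B) ⟹ (((Ubr C D (n+1)) ⋀ (D (n+1) ▷ A)) ▷ (B ⋀ (□C)))

lemma force_conj_iff (F : Veltman) (V : ℕ → F.W → Prop) {X Y : ILForm} {w : F.W} :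
    force F V (X ⋀ Y) w ↔ (force F V X w ∧ force F V Y w) := by
  show ((force F V X w → (force F V Y w → False)) → False) ↔ _
  tauto

lemma force_dia_iff (F : Veltman) (V : ℕ → F.W → Prop) {X : ILForm} {w : F.W} :
    force F V (◇X) w ↔ ∃ v, F.R w v ∧ force F V X v := by
  show ((∀ v, F.R w v → (force F V X v → False)) → False) ↔ _
  constructor
  · intro h
    by_contra hc
    push_neg at hc
    exact h fun v hv hx => hc v hv hx
  · rintro ⟨v, hv, hx⟩ h
    exact h v hv hx

lemma force_notrhd (F : Veltman) (V : ℕ → F.W → Prop) {X Y : ILForm} {w : F.W}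
    (h : force F V (∼(X ▷ (∼Y))) w) :
    ∃ v, F.R w v ∧ force F V X v ∧ ∀ u, F.S w v u → force F V Y u := by
  by_contra hc
  push_neg at hc
  refine h fun v hv hx => ?_
  obtain ⟨u, hu, hyu⟩ := hc v hv hx
  exact ⟨u, hu, fun h' => hyu h'⟩

/-- From `v ⊩ U_{m+1}` extract the chain data: worlds `x0, y0, y` with
`v R y`, `y ⊩ D_{m+1}`, all `S_{x0}`-successors of `y0` forcing `C`, and
such that any `S_v`-successor `y'` of `y` yields `B_m(v, x0, y0, y')`. -/
lemma ubr_chain (F : Veltman) (V : ℕ → F.W → Prop) (C : ILForm) (D : ℕ → ILForm) :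
    ∀ (m : ℕ) (v : F.W), force F V (Ubr C D (m+1)) v →
      ∃ x0 y0 y, F.R v y ∧ force F V (D (m+1)) y ∧
        (∀ z, F.S x0 y0 z → force F V C z) ∧
        (∀ y', F.S v y y' → Bq F m v x0 y0 y') := by
  intro m
  induction m with
  | zero =>
    intro v hv
    rw [show Ubr C D 1 = ◇(∼(D 1 ▷ (∼C))) from rfl, force_dia_iff] at hv
    obtain ⟨x0, hvx0, hx0⟩ := hv
    obtain ⟨y0, hx0y0, hD, hC⟩ := force_notrhd F V hx0
    exact ⟨x0, y0, y0, F.R_trans hvx0 hx0y0, hD, hC,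
      fun y' hS => ⟨hvx0, hx0y0, hS⟩⟩
  | succ m ih =>
    intro v hv
    rw [show Ubr C D (m+2) = ◇(((D (m+1)) ▷ (D (m+2))) ⋀ (Ubr C D (m+1))) from rfl,
      force_dia_iff] at hv
    obtain ⟨x, hvx, hx⟩ := hv
    rw [force_conj_iff] at hx
    obtain ⟨hrhd, hU⟩ := hx
    obtain ⟨x0, y0, y, hxy, hD, hC, hchain⟩ := ih x hU
    obtain ⟨y', hSy', hD'⟩ := hrhd y hxy hD
    refine ⟨x0, y0, y', F.R_trans hvx (F.S_dom hSy').2, hD', hC, ?_⟩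
    intro y'' hS
    exact ⟨x, y', hvx, hchain y' hSy', hS⟩

/-- if a Veltman frame satisfies the frame condition `F^n`, then it
validates the principle `R^n` under every valuation. -/
theorem stmt13 (F : Veltman) (n : ℕ) (hF : FbroadCond F n)
    (A B C : ILForm) (D : ℕ → ILForm) :
    valid F (Rbroad A B C D n) := by
  intro V w
  cases n with
  | zero =>
    intro hAB v hwv hv
    obtain ⟨y0, hvy0, hA, hC⟩ := force_notrhd F V hv
    obtain ⟨u, hSu, hB⟩ := hAB y0 (F.R_trans hwv hvy0) hA
    refine ⟨u, F.S_trans (F.R_sub_S hwv hvy0) hSu, ?_⟩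
    rw [force_conj_iff]
    refine ⟨hB, fun t hut => ?_⟩
    exact hC t (hF w v y0 u ⟨hwv, hvy0, hSu⟩ t hut)
  | succ m =>
    intro hAB v hwv hv
    rw [force_conj_iff] at hv
    obtain ⟨hU, hDA⟩ := hv
    obtain ⟨x0, y0, y, hvy, hD, hC, hchain⟩ := ubr_chain F V C D m v hU
    obtain ⟨y', hSy', hA⟩ := hDA y hvy hD
    obtain ⟨u, hSu, hB⟩ := hAB y' (F.R_trans hwv (F.S_dom hSy').2) hA
    refine ⟨u, F.S_trans (F.R_sub_S hwv (F.S_dom hSy').2) hSu, ?_⟩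
    rw [force_conj_iff]
    refine ⟨hB, fun t hut => ?_⟩
    have hBq : Bq F (m+1) w x0 y0 u := ⟨v, y', hwv, hchain y' hSy', hSu⟩
    exact hC t (hF w x0 y0 u hBq t hut)
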